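/- Let K be a compact Hausdorff space whose derived set K′ (the set of non-isolated points of K) is infinite, and let the scalar field be 𝕜 ∈ {ℝ, ℂ}. Then there exists a linear isometric embedding of c₀ into C(K) whose range does SPR. -/

import Mathlib

open scoped ZeroAtInfty

noncomputable section

/-- The pointwise modulus of a continuous function, as a real-valued continuous function. -/
def cmAbs {K : Type*} [TopologicalSpace K] {𝕜 : Type*} [RCLike 𝕜]
    (f : C(K, 𝕜)) : C(K, ℝ) :=
  ⟨fun x => ‖f x‖, (map_continuous f).norm⟩

/-- `inf_{‖λ‖ = 1} ‖f - λ • g‖`. -/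
def sprInf {K : Type*} [TopologicalSpace K] [CompactSpace K] {𝕜 : Type*} [RCLike 𝕜]
    (f g : C(K, 𝕜)) : ℝ :=
  ⨅ l : {c : 𝕜 // ‖c‖ = 1}, ‖f - (l : 𝕜) • g‖

/-- A subspace `E ⊆ C(K, 𝕜)` does `C`-stable phase retrieval. -/
def DoesCSPR {K : Type*} [TopologicalSpace K] [CompactSpace K] {𝕜 : Type*} [RCLike 𝕜]
    (E : Submodule 𝕜 C(K, 𝕜)) (C : ℝ) : Prop :=
  ∀ f ∈ E, ∀ g ∈ E, sprInf f g ≤ C * ‖cmAbs f - cmAbs g‖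

/-- A subspace `E ⊆ C(K, 𝕜)` does stable phase retrieval. -/
def DoesSPR {K : Type*} [TopologicalSpace K] [CompactSpace K] {𝕜 : Type*} [RCLike 𝕜]
    (E : Submodule 𝕜 C(K, 𝕜)) : Prop :=
  ∃ C : ℝ, 1 ≤ C ∧ DoesCSPR E C

/-!
Since `K'` is infinite, it contains points `zₙ` with pairwise disjoint open neighbourhoods `Uₙ`;
each `zₙ` is non-isolated, so near it there are infinitely many pairwise disjoint open sets.
Urysohn's lemma gives bumps `θₙ` supported in `Uₙ` and, where `θₙ = 1`, bumps `bₙᵢ` with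
disjoint supports peaking at points `pₙᵢ`. With
`ψₖ = (θₖ + bₖ₀ + ∑_{n < k} ∑_s phase(s) bₙ₍ₖ,ₛ₎) / 2` and `phase(s) ∈ {1, i}` one has
`∑ₖ |ψₖ| ≤ 1`, so `J a = ∑ₖ aₖ ψₖ` is an isometry of `c₀` into `C(K)` with
`(J a)(pₙ₀) = aₙ` and `(J a)(pₙ₍ₘ,ₛ₎) = (aₙ + phase(s) aₘ) / 2` for `n < m`.

If `‖|J a| - |J b|‖ = δ`, the moduli `|aₙ|`, `|aₙ + aₘ|`, `|aₙ + i aₘ|` are known up to `O(δ)`,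
hence by polarization so is every product `conj aₙ · aₘ`. Rotating `b` so that `b_N` is aligned
with a coordinate `a_N` of nearly maximal modulus, `aₘ` is recovered from `conj a_N · aₘ` for
every `m`, which gives `‖a - λ b‖ ≤ 25 δ` for some `|λ| = 1`.
-/

open Set Filter Topology Function

theorem ZeroAtInftyContinuousMap.norm_apply_le {α β : Type*} [TopologicalSpace α]
    [SeminormedAddCommGroup β] (f : C₀(α, β)) (x : α) : ‖f x‖ ≤ ‖f‖ := by
  rw [← norm_toBCF_eq_norm]
  exact f.toBCF.norm_coe_le_norm x

theorem ZeroAtInftyContinuousMap.norm_le {α β : Type*} [TopologicalSpace α]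
    [SeminormedAddCommGroup β] (f : C₀(α, β)) {C : ℝ} (hC : 0 ≤ C) :
    ‖f‖ ≤ C ↔ ∀ x, ‖f x‖ ≤ C := by
  rw [← norm_toBCF_eq_norm]
  exact f.toBCF.norm_le hC

theorem Finset.sum_le_of_support_subsingleton {α : Type*} {f : α → ℝ}
    (hf : (support f).Subsingleton) {B : ℝ} (hB : 0 ≤ B) (hfB : ∀ a, f a ≤ B) (s : Finset α) :
    ∑ a ∈ s, f a ≤ B := by
  by_cases h : ∃ a ∈ s, f a ≠ 0
  · obtain ⟨a, has, ha⟩ := h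
    rw [Finset.sum_eq_single_of_mem a has fun b _ hba => by_contra fun hb => hba (hf hb ha)]
    exact hfB a
  · push Not at h
    rw [Finset.sum_eq_zero h]
    exact hB

theorem support_apply_subsingleton_of_pairwise_disjoint {ι X M : Type*} [Zero M] {f : ι → X → M}
    (hf : Pairwise (Disjoint on fun i => support (f i))) (x : X) :
    (support fun i => f i x).Subsingleton := fun _ hi _ hj =>
  by_contra fun hij => (hf hij).ne_of_mem hi hj rfl

section SeriesEmbedding

variable {𝕜 : Type*} [RCLike 𝕜] {K : Type*} [TopologicalSpace K] [CompactSpace K]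
  {ψ : ℕ → C(K, 𝕜)} (hψ : ∀ (F : Finset ℕ) (x : K), ∑ k ∈ F, ‖ψ k x‖ ≤ 1)
include hψ

theorem norm_sum_smul_le_of_forall_norm_le {c : ℕ → 𝕜} {F : Finset ℕ} {C : ℝ} (hC : 0 ≤ C)
    (hc : ∀ k ∈ F, ‖c k‖ ≤ C) : ‖∑ k ∈ F, c k • ψ k‖ ≤ C := by
  refine (ContinuousMap.norm_le _ hC).2 fun x => ?_
  calc ‖(∑ k ∈ F, c k • ψ k) x‖ = ‖∑ k ∈ F, c k * ψ k x‖ := by simp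
    _ ≤ ∑ k ∈ F, C * ‖ψ k x‖ := by
        refine (norm_sum_le _ _).trans (Finset.sum_le_sum fun k hk => ?_)
        rw [norm_mul]
        exact mul_le_mul_of_nonneg_right (hc k hk) (norm_nonneg _)
    _ ≤ C := by
        rw [← Finset.mul_sum]
        exact mul_le_of_le_one_right hC (hψ F x)

theorem summable_c0_smul (a : C₀(ℕ, 𝕜)) : Summable fun k => a k • ψ k := by
  refine summable_iff_vanishing_norm.2 fun ε hε => ?_
  have ha : ∀ᶠ k in cofinite, ‖a k‖ < ε / 2 := by
    have := a.zero_at_infty'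
    rw [cocompact_eq_cofinite] at this
    exact NormedAddGroup.tendsto_nhds_zero.1 this _ (half_pos hε)
  refine ⟨ha.toFinset, fun t ht => ?_⟩
  refine (norm_sum_smul_le_of_forall_norm_le hψ (half_pos hε).le fun k hk => ?_).trans_lt
    (half_lt_self hε)
  by_contra h
  exact Finset.disjoint_left.1 ht hk (ha.mem_toFinset.2 (not_lt.2 (le_of_not_ge h)))

def c0SeriesMap : C₀(ℕ, 𝕜) →ₗ[𝕜] C(K, 𝕜) where
  toFun a := ∑' k, a k • ψ k
  map_add' a b := by
    simp only [ZeroAtInftyContinuousMap.add_apply, add_smul]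
    exact (summable_c0_smul hψ a).tsum_add (summable_c0_smul hψ b)
  map_smul' c a := by
    simp only [ZeroAtInftyContinuousMap.smul_apply, smul_eq_mul, mul_smul, RingHom.id_apply]
    exact (summable_c0_smul hψ a).tsum_const_smul c

theorem hasSum_c0SeriesMap_apply (a : C₀(ℕ, 𝕜)) (x : K) :
    HasSum (fun k => a k * ψ k x) (c0SeriesMap hψ a x) := by
  have := ((continuous_eval_const x).tendsto _).comp (summable_c0_smul hψ a).hasSum
  refine this.congr fun F => ?_
  simp

theorem c0SeriesMap_apply_eq_sum {x : K} {S : Finset ℕ} (hS : ∀ k ∉ S, ψ k x = 0)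
    (a : C₀(ℕ, 𝕜)) : c0SeriesMap hψ a x = ∑ k ∈ S, a k * ψ k x :=
  (hasSum_c0SeriesMap_apply hψ a x).unique
    (hasSum_sum_of_ne_finset_zero fun k hk => by simp [hS k hk])

theorem norm_c0SeriesMap_le (a : C₀(ℕ, 𝕜)) : ‖c0SeriesMap hψ a‖ ≤ ‖a‖ :=
  le_of_tendsto (summable_c0_smul hψ a).hasSum.norm <| Eventually.of_forall fun _ =>
    norm_sum_smul_le_of_forall_norm_le hψ (norm_nonneg a) fun k _ => a.norm_apply_le k

theorem c0SeriesMap_apply_eq_of_forall_eq_ite {x : K} {n : ℕ}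
    (hx : ∀ k, ψ k x = if k = n then 1 else 0) (a : C₀(ℕ, 𝕜)) : c0SeriesMap hψ a x = a n := by
  rw [c0SeriesMap_apply_eq_sum hψ (S := {n}) fun k hk => by simp_all, Finset.sum_singleton, hx,
    if_pos rfl, mul_one]

def c0SeriesIsometry (p : ℕ → K) (hp : ∀ n k, ψ k (p n) = if k = n then 1 else 0) :
    C₀(ℕ, 𝕜) →ₗᵢ[𝕜] C(K, 𝕜) where
  toLinearMap := c0SeriesMap hψ
  norm_map' a := by
    refine le_antisymm (norm_c0SeriesMap_le hψ a) ((a.norm_le (norm_nonneg _)).2 fun n => ?_)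
    rw [← c0SeriesMap_apply_eq_of_forall_eq_ite hψ (hp n) a]
    exact ContinuousMap.norm_coe_le_norm _ _

end SeriesEmbedding

section Topology

variable {X : Type*} [TopologicalSpace X] [T2Space X]

theorem AccPt.exists_open_subset_disjoint_nhds {z : X} {s : Set X} (hz : AccPt z (𝓟 s))
    {V : Set X} (hV : V ∈ 𝓝 z) :
    ∃ A W, IsOpen A ∧ A ⊆ V ∧ (A ∩ s).Nonempty ∧ W ∈ 𝓝 z ∧ W ⊆ V ∧ Disjoint A W := by
  obtain ⟨y, ⟨hyV, hys⟩, hyz⟩ :=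
    accPt_iff_nhds.1 hz (interior V) (interior_mem_nhds.2 hV)
  obtain ⟨P, Q, hP, hQ, hyP, hzQ, hPQ⟩ := t2_separation hyz
  exact ⟨P ∩ interior V, Q ∩ V, hP.inter isOpen_interior,
    inter_subset_right.trans interior_subset, ⟨y, ⟨hyP, hyV⟩, hys⟩,
    inter_mem (hQ.mem_nhds hzQ) hV, inter_subset_right,
    hPQ.mono inter_subset_left inter_subset_left⟩

theorem AccPt.exists_pairwise_disjoint_isOpen {ι : Type*} [Countable ι] {z : X} {s : Set X}
    (hz : AccPt z (𝓟 s)) {G : Set X} (hG : G ∈ 𝓝 z) :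
    ∃ (A : ι → Set X) (x : ι → X), (∀ i, IsOpen (A i)) ∧ (∀ i, A i ⊆ G) ∧
      (∀ i, x i ∈ A i ∩ s) ∧ Pairwise (Disjoint on A) := by
  obtain ⟨e, he⟩ := Countable.exists_injective_nat ι
  choose A W hAo hAV hAs hW hWV hAW using
    fun V : {V // V ∈ 𝓝 z} => hz.exists_open_subset_disjoint_nhds V.2
  -- `V j` is a decreasing sequence of neighbourhoods of `z`; `A (V j)` avoids `V (j + 1)`.
  let V : ℕ → {V // V ∈ 𝓝 z} := fun j => Nat.rec ⟨G, hG⟩ (fun _ V => ⟨W V, hW V⟩) j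
  have hV : Antitone fun j => (V j).1 := antitone_nat_of_succ_le fun j => hWV (V j)
  have hdisj : Pairwise (Disjoint on fun j => A (V j)) := by
    refine (pairwise_disjoint_on _).2 fun i j hij => (hAW (V i)).mono_right ?_
    exact (hAV (V j)).trans (hV (Nat.succ_le_of_lt hij))
  choose x hx using fun j => hAs (V j)
  exact ⟨fun i => A (V (e i)), fun i => x (e i), fun i => hAo _,
    fun i => (hAV _).trans (hV (Nat.zero_le _)), fun i => hx (e i), hdisj.comp_of_injective he⟩

theorem exists_continuous_support_subset_eqOn_one [CompactSpace X] {U C : Set X} (hU : IsOpen U)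
    (hC : IsClosed C) (hCU : C ⊆ U) :
    ∃ f : C(X, ℝ), support f ⊆ U ∧ EqOn f 1 C ∧ ∀ x, f x ∈ Icc (0 : ℝ) 1 := by
  obtain ⟨f, hfU, hf1, hf⟩ :=
    exists_tsupport_one_of_isOpen_isClosed hU isClosed_closure.isCompact hC hCU
  exact ⟨f, (subset_tsupport f).trans hfU, hf1, hf⟩

end Topology

theorem abs_sq_sub_sq_le {x y R c : ℝ} (hx : |x| ≤ R) (hy : |y| ≤ R) (h : |x - y| ≤ c) :
    |x ^ 2 - y ^ 2| ≤ 2 * R * c := by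
  rw [sq_sub_sq, abs_mul]
  exact mul_le_mul (by linarith [abs_add_le x y]) h (abs_nonneg _)
    (by linarith [abs_nonneg x])

namespace RCLike

open ComplexConjugate

variable {𝕜 : Type*} [RCLike 𝕜]

theorem norm_I_le_one : ‖(I : 𝕜)‖ ≤ 1 := by
  rw [norm_I]
  split_ifs <;> norm_num

theorem norm_le_abs_re_add_abs_im (z : 𝕜) : ‖z‖ ≤ |re z| + |im z| :=
  calc ‖z‖ = ‖(re z : 𝕜) + im z * I‖ := by rw [re_add_im]
    _ ≤ |re z| + |im z| * ‖(I : 𝕜)‖ := by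
        refine (norm_add_le _ _).trans_eq ?_
        rw [norm_mul, norm_ofReal, norm_ofReal]
    _ ≤ |re z| + |im z| := by
        gcongr
        exact mul_le_of_le_one_right (abs_nonneg _) norm_I_le_one

theorem re_conj_mul (u v : 𝕜) : re (conj u * v) = (‖u + v‖ ^ 2 - ‖u‖ ^ 2 - ‖v‖ ^ 2) / 2 := by
  rw [← inner_apply', re_inner_eq_norm_add_mul_self_sub_norm_mul_self_sub_norm_mul_self_div_two]
  ring

theorem abs_re_conj_mul_sub_le {u v u' v' : 𝕜} {δ R : ℝ}
    (hu : ‖u‖ ≤ R) (hv : ‖v‖ ≤ R) (hu' : ‖u'‖ ≤ R) (hv' : ‖v'‖ ≤ R)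
    (h₁ : |‖u‖ - ‖u'‖| ≤ δ) (h₂ : |‖v‖ - ‖v'‖| ≤ δ) (h₃ : |‖u + v‖ - ‖u' + v'‖| ≤ 2 * δ) :
    |re (conj u * v) - re (conj u' * v')| ≤ 6 * R * δ := by
  have hs (x y : 𝕜) (hx : ‖x‖ ≤ R) (hy : ‖y‖ ≤ R) : |‖x + y‖| ≤ 2 * R := by
    rw [abs_norm]; linarith [norm_add_le x y]
  have e₃ := abs_sq_sub_sq_le (hs u v hu hv) (hs u' v' hu' hv') h₃
  have e₁ := abs_sq_sub_sq_le (R := R) (by rwa [abs_norm]) (by rwa [abs_norm]) h₁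
  have e₂ := abs_sq_sub_sq_le (R := R) (by rwa [abs_norm]) (by rwa [abs_norm]) h₂
  rw [re_conj_mul, re_conj_mul]
  rw [abs_le] at e₁ e₂ e₃ ⊢
  constructor <;> linarith

theorem norm_I_mul_le (z : 𝕜) : ‖I * z‖ ≤ ‖z‖ := by
  rw [norm_mul]
  exact mul_le_of_le_one_left (norm_nonneg _) norm_I_le_one

theorem abs_norm_I_mul_sub_norm_I_mul_le (z w : 𝕜) : |‖I * z‖ - ‖I * w‖| ≤ |‖z‖ - ‖w‖| := by
  rw [norm_mul, norm_mul, ← mul_sub, abs_mul, abs_norm]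
  exact mul_le_of_le_one_left (abs_nonneg _) norm_I_le_one

theorem abs_im_conj_mul_sub_le {u v u' v' : 𝕜} {δ R : ℝ}
    (hu : ‖u‖ ≤ R) (hv : ‖v‖ ≤ R) (hu' : ‖u'‖ ≤ R) (hv' : ‖v'‖ ≤ R)
    (h₁ : |‖u‖ - ‖u'‖| ≤ δ) (h₂ : |‖v‖ - ‖v'‖| ≤ δ)
    (h₄ : |‖u + I * v‖ - ‖u' + I * v'‖| ≤ 2 * δ ∨ |‖v + I * u‖ - ‖v' + I * u'‖| ≤ 2 * δ) :
    |im (conj u * v) - im (conj u' * v')| ≤ 6 * R * δ := by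
  -- `im (conj u * v) = -re (conj u * (I * v)) = re (conj v * (I * u))`
  rcases h₄ with h₄ | h₄
  · have := abs_re_conj_mul_sub_le hu ((norm_I_mul_le v).trans hv) hu'
      ((norm_I_mul_le v').trans hv') h₁ ((abs_norm_I_mul_sub_norm_I_mul_le v v').trans h₂) h₄
    rwa [mul_left_comm, mul_left_comm _ I, I_mul_re, I_mul_re, neg_sub_neg,
      abs_sub_comm] at this
  · have := abs_re_conj_mul_sub_le hv ((norm_I_mul_le u).trans hu) hv'
      ((norm_I_mul_le u').trans hu') h₂ ((abs_norm_I_mul_sub_norm_I_mul_le u u').trans h₁) h₄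
    have hconj (x y : 𝕜) : conj x * (I * y) = I * conj (conj y * x) := by
      simp only [map_mul, RingHomCompTriple.comp_apply, RingHom.id_apply]
      ring
    rwa [hconj, hconj, I_mul_re, I_mul_re, conj_im, conj_im, neg_neg, neg_neg] at this

theorem norm_mul_norm_sub_le {u v u' v' : 𝕜} {δ R : ℝ}
    (hu : ‖u‖ ≤ R) (hv : ‖v‖ ≤ R) (hu' : ‖u'‖ ≤ R) (hv' : ‖v'‖ ≤ R)
    (h₀ : ‖u - u'‖ ≤ δ) (h₂ : |‖v‖ - ‖v'‖| ≤ δ) (h₃ : |‖u + v‖ - ‖u' + v'‖| ≤ 2 * δ)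
    (h₄ : |‖u + I * v‖ - ‖u' + I * v'‖| ≤ 2 * δ ∨ |‖v + I * u‖ - ‖v' + I * u'‖| ≤ 2 * δ) :
    ‖u‖ * ‖v - v'‖ ≤ 13 * R * δ := by
  have h₁ : |‖u‖ - ‖u'‖| ≤ δ := (abs_norm_sub_norm_le u u').trans h₀
  have hw : ‖conj u * v - conj u' * v'‖ ≤ 12 * R * δ :=
    calc ‖conj u * v - conj u' * v'‖
        ≤ |re (conj u * v - conj u' * v')| + |im (conj u * v - conj u' * v')| :=
          norm_le_abs_re_add_abs_im _
      _ ≤ 6 * R * δ + 6 * R * δ := by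
          rw [map_sub, map_sub]
          exact add_le_add (abs_re_conj_mul_sub_le hu hv hu' hv' h₁ h₂ h₃)
            (abs_im_conj_mul_sub_le hu hv hu' hv' h₁ h₂ h₄)
      _ = 12 * R * δ := by ring
  calc ‖u‖ * ‖v - v'‖ = ‖(conj u * v - conj u' * v') - conj (u - u') * v'‖ := by
        rw [← norm_conj u, ← norm_mul, map_sub]; ring_nf
    _ ≤ 12 * R * δ + δ * R := by
        refine (norm_sub_le _ _).trans (add_le_add hw ?_)
        rw [norm_mul, norm_conj]
        exact mul_le_mul h₀ hv' (norm_nonneg _) ((norm_nonneg _).trans h₀)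
    _ = 13 * R * δ := by ring

theorem exists_norm_eq_one_norm_sub_mul_eq (a : 𝕜) {b : 𝕜}
    (hb : b ≠ 0) : ∃ c : 𝕜, ‖c‖ = 1 ∧ ‖a - c * b‖ = |‖a‖ - ‖b‖| := by
  obtain rfl | ha := eq_or_ne a 0
  · exact ⟨1, norm_one, by simp⟩
  have ha' : 0 < ‖a‖ := norm_pos_iff.2 ha
  have hb' : 0 < ‖b‖ := norm_pos_iff.2 hb
  refine ⟨a * conj b / (‖a‖ * ‖b‖ : ℝ), ?_, ?_⟩
  · rw [norm_div, norm_mul, norm_conj, norm_ofReal, abs_of_pos (by positivity)]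
    exact div_self (by positivity)
  · have : a - a * conj b / (‖a‖ * ‖b‖ : ℝ) * b = ((1 - ‖b‖ / ‖a‖ : ℝ) : 𝕜) * a := by
      rw [div_mul_eq_mul_div, mul_assoc, conj_mul]
      push_cast
      field_simp
    rw [this, norm_mul, norm_ofReal, ← abs_norm a, ← abs_mul, abs_norm, sub_mul,
      div_mul_cancel₀ _ ha'.ne', one_mul]

end RCLike

/-- Over `ℝ`, `I = 0`, so the second phase is `0`; imaginary parts vanish there anyway. -/
def phase (𝕜 : Type*) [RCLike 𝕜] : Fin 2 → 𝕜 := ![1, RCLike.I]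

theorem norm_phase_le_one {𝕜 : Type*} [RCLike 𝕜] (s : Fin 2) : ‖phase 𝕜 s‖ ≤ 1 := by
  fin_cases s
  · simp [phase]
  · exact RCLike.norm_I_le_one

section ModuliClose

open RCLike

variable {𝕜 : Type*} [RCLike 𝕜]

variable (𝕜) in
def ModuliClose (a b : ℕ → 𝕜) (δ : ℝ) : Prop :=
  (∀ n, |‖a n‖ - ‖b n‖| ≤ δ) ∧
    ∀ n m, n < m → ∀ s, |‖a n + phase 𝕜 s * a m‖ - ‖b n + phase 𝕜 s * b m‖| ≤ 2 * δ

namespace ModuliClose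

variable {a b : ℕ → 𝕜} {δ : ℝ} (h : ModuliClose 𝕜 a b δ)
include h

theorem const_mul {c : 𝕜} (hc : ‖c‖ = 1) : ModuliClose 𝕜 a (fun n => c * b n) δ := by
  refine ⟨fun n => by simpa [hc] using h.1 n, fun n m hnm s => ?_⟩
  rw [mul_left_comm, ← mul_add, norm_mul, hc, one_mul]
  exact h.2 n m hnm s

theorem pair {n N : ℕ} (hnN : n ≠ N) :
    |‖a N + a n‖ - ‖b N + b n‖| ≤ 2 * δ ∧
      (|‖a N + I * a n‖ - ‖b N + I * b n‖| ≤ 2 * δ ∨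
        |‖a n + I * a N‖ - ‖b n + I * b N‖| ≤ 2 * δ) := by
  have h0 (n m) (hnm : n < m) := h.2 n m hnm 0
  have h1 (n m) (hnm : n < m) := h.2 n m hnm 1
  simp only [phase, Matrix.cons_val_zero, Matrix.cons_val_one, one_mul] at h0 h1
  rcases hnN.lt_or_gt with hlt | hlt
  · rw [add_comm (a N), add_comm (b N)]
    exact ⟨h0 n N hlt, Or.inr (h1 n N hlt)⟩
  · exact ⟨h0 N n hlt, Or.inl (h1 N n hlt)⟩

theorem norm_sub_le_of_near_peak {M : ℝ} {N : ℕ} (haM : ∀ n, ‖a n‖ ≤ M) (hδM : 4 * δ < M)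
    (hN : 4 / 5 * M < ‖a N‖) (hN' : ‖a N - b N‖ ≤ δ) (n : ℕ) : ‖a n - b n‖ ≤ 25 * δ := by
  have hδ : 0 ≤ δ := (abs_nonneg _).trans (h.1 0)
  obtain rfl | hnN := eq_or_ne n N
  · linarith
  have hbM (k) : ‖b k‖ ≤ M + δ := by linarith [(abs_le.1 (h.1 k)).1, haM k]
  obtain ⟨h₃, h₄⟩ := h.pair hnN
  -- `13 (M + δ) δ / ‖a N‖ ≤ 25 δ` because `M + δ < 5 M / 4` and `‖a N‖ > 4 M / 5`.
  have := norm_mul_norm_sub_le (by linarith [haM N]) (by linarith [haM n]) (hbM N) (hbM n)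
    hN' (h.1 n) h₃ h₄
  nlinarith [norm_nonneg (a n - b n)]

end ModuliClose

theorem ModuliClose.exists_norm_sub_smul_le {a b : C₀(ℕ, 𝕜)} {δ : ℝ}
    (h : ModuliClose 𝕜 a b δ) : ∃ c : 𝕜, ‖c‖ = 1 ∧ ‖a - c • b‖ ≤ 25 * δ := by
  have hδ : 0 ≤ δ := (abs_nonneg _).trans (h.1 0)
  by_cases hδa : ‖a‖ ≤ 4 * δ
  · refine ⟨1, norm_one, ?_⟩
    refine ((a - (1 : 𝕜) • b).norm_le (by positivity)).2 fun n => ?_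
    simp only [one_smul, ZeroAtInftyContinuousMap.sub_apply]
    linarith [norm_sub_le (a n) (b n), a.norm_apply_le n, (abs_le.1 (h.1 n)).1]
  push Not at hδa
  obtain ⟨N, hN⟩ : ∃ N, 4 / 5 * ‖a‖ < ‖a N‖ := by
    by_contra! hN
    linarith [(a.norm_le (by positivity)).2 hN]
  have hbN : b N ≠ 0 := by
    intro hb
    have := h.1 N
    rw [hb, norm_zero, sub_zero, abs_norm] at this
    linarith
  obtain ⟨c, hc, hcN⟩ := exists_norm_eq_one_norm_sub_mul_eq (a N) hbN
  refine ⟨c, hc, ((a - c • b).norm_le (by positivity)).2 fun n => ?_⟩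
  exact (h.const_mul hc).norm_sub_le_of_near_peak a.norm_apply_le hδa hN
    (hcN.trans_le (h.1 N)) n

end ModuliClose

section StablePhaseRetrieval

variable {𝕜 : Type*} [RCLike 𝕜] {K : Type*} [TopologicalSpace K] [CompactSpace K]

theorem sprInf_le (f g : C(K, 𝕜)) {c : 𝕜} (hc : ‖c‖ = 1) : sprInf f g ≤ ‖f - c • g‖ :=
  ciInf_le ⟨0, by rintro _ ⟨l, rfl⟩; exact norm_nonneg _⟩ (⟨c, hc⟩ : {c : 𝕜 // ‖c‖ = 1})

theorem abs_norm_sub_norm_le_norm_cmAbs_sub (f g : C(K, 𝕜)) (x : K) :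
    |‖f x‖ - ‖g x‖| ≤ ‖cmAbs f - cmAbs g‖ := by
  simpa [cmAbs, Real.norm_eq_abs] using (cmAbs f - cmAbs g).norm_coe_le_norm x

theorem doesSPR_range_of_apply (J : C₀(ℕ, 𝕜) →ₗᵢ[𝕜] C(K, 𝕜)) (p : ℕ → K)
    (q : ℕ → ℕ → Fin 2 → K) (hp : ∀ a n, J a (p n) = a n)
    (hq : ∀ a n m, n < m → ∀ s, J a (q n m s) = (a n + phase 𝕜 s * a m) / 2) :
    DoesSPR (LinearMap.range J.toLinearMap) := by
  refine ⟨25, by norm_num, ?_⟩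
  rintro _ ⟨a, rfl⟩ _ ⟨b, rfl⟩
  set δ := ‖cmAbs (J a) - cmAbs (J b)‖
  have hδ := abs_norm_sub_norm_le_norm_cmAbs_sub (J a) (J b)
  have hab : ModuliClose 𝕜 a b δ := by
    refine ⟨fun n => by simpa only [hp] using hδ (p n), fun n m hnm s => ?_⟩
    have := hδ (q n m s)
    rw [hq a n m hnm, hq b n m hnm, norm_div, norm_div, RCLike.norm_two, ← sub_div, abs_div,
      abs_two] at this
    linarith
  obtain ⟨c, hc, hcab⟩ := hab.exists_norm_sub_smul_le
  calc sprInf (J a) (J b) ≤ ‖J a - c • J b‖ := sprInf_le _ _ hc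
    _ = ‖a - c • b‖ := by rw [← map_smul, ← map_sub, J.norm_map]
    _ ≤ 25 * δ := hcab

end StablePhaseRetrieval

structure NestedBumps (K : Type*) [TopologicalSpace K] (ι : Type*) where
  outer : ℕ → C(K, ℝ)
  inner : ℕ → ι → C(K, ℝ)
  center : ℕ → ι → K
  outer_mem_Icc : ∀ n x, outer n x ∈ Icc (0 : ℝ) 1
  inner_mem_Icc : ∀ n i x, inner n i x ∈ Icc (0 : ℝ) 1
  pairwise_disjoint_support_outer : Pairwise (Disjoint on fun n => support (outer n))
  pairwise_disjoint_support_inner : ∀ n, Pairwise (Disjoint on fun i => support (inner n i))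
  outer_eq_one_of_inner_ne_zero : ∀ n i x, inner n i x ≠ 0 → outer n x = 1
  inner_center : ∀ n i, inner n i (center n i) = 1

namespace NestedBumps

variable {K : Type*} [TopologicalSpace K] {ι : Type*} (B : NestedBumps K ι)

theorem outer_eq_zero_of_inner_ne_zero {n m : ℕ} {i : ι} {x : K} (hx : B.inner n i x ≠ 0)
    (hmn : m ≠ n) : B.outer m x = 0 := by
  by_contra h
  refine (B.pairwise_disjoint_support_outer hmn).ne_of_mem h ?_ rfl
  simp [mem_support, B.outer_eq_one_of_inner_ne_zero n i x hx]

theorem inner_eq_zero_of_inner_ne_zero {n m : ℕ} {i j : ι} {x : K} (hx : B.inner n i x ≠ 0)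
    (hne : (m, j) ≠ (n, i)) : B.inner m j x = 0 := by
  by_contra h
  obtain rfl | hmn := eq_or_ne m n
  · exact (B.pairwise_disjoint_support_inner m (fun hji => hne (by rw [hji]))).ne_of_mem h hx rfl
  · have := B.outer_eq_zero_of_inner_ne_zero hx hmn
    simp [B.outer_eq_one_of_inner_ne_zero m j x h] at this

theorem exists_forall_ne_inner_eq_zero [Nonempty ι] (x : K) :
    ∃ n i, ∀ m j, (m, j) ≠ (n, i) → B.inner m j x = 0 := by
  by_cases h : ∃ n i, B.inner n i x ≠ 0
  · obtain ⟨n, i, h⟩ := h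
    exact ⟨n, i, fun m j => B.inner_eq_zero_of_inner_ne_zero h⟩
  · push Not at h
    exact ⟨0, Classical.arbitrary ι, fun m j _ => h m j⟩

end NestedBumps

theorem exists_nestedBumps {K : Type*} [TopologicalSpace K] [CompactSpace K] [T2Space K]
    (hK : (derivedSet (univ : Set K)).Infinite) (ι : Type*) [Countable ι] :
    Nonempty (NestedBumps K ι) := by
  obtain ⟨z₀, hz₀⟩ := hK.exists_accPt_principal
  obtain ⟨U, z, hU, -, hzU, hUdisj⟩ := hz₀.exists_pairwise_disjoint_isOpen (ι := ℕ) univ_mem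
  choose V hV hVc hVU using fun n =>
    exists_mem_nhds_isClosed_subset ((hU n).mem_nhds (hzU n).1)
  choose A c hA hAV hcA hAdisj using fun n =>
    (mem_derivedSet.1 (hzU n).2).exists_pairwise_disjoint_isOpen (ι := ι) (hV n)
  choose θ hθU hθV hθ using fun n =>
    exists_continuous_support_subset_eqOn_one (hU n) (hVc n) (hVU n)
  choose b hbA hbc hb using fun n i =>
    exists_continuous_support_subset_eqOn_one (hA n i) isClosed_singleton
      (singleton_subset_iff.2 (hcA n i).1)
  exact ⟨{
    outer := θ
    inner := b
    center := c
    outer_mem_Icc := hθ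
    inner_mem_Icc := hb
    pairwise_disjoint_support_outer := hUdisj.mono fun m n h => h.mono (hθU m) (hθU n)
    pairwise_disjoint_support_inner := fun n =>
      (hAdisj n).mono fun i j h => h.mono (hbA n i) (hbA n j)
    outer_eq_one_of_inner_ne_zero := fun n i x hx => hθV n (hAV n i (hbA n i hx))
    inner_center := fun n i => hbc n i rfl }⟩

section Frame

variable (𝕜 : Type*) [RCLike 𝕜]

/-- The coefficient of the inner bump `(n, i)` in `frame k`; the index `none` plays the role of
the header's `0`. -/
def frameCoeff (n : ℕ) : Option (ℕ × Fin 2) → ℕ → 𝕜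
  | none, k => if k = n then 1 else 0
  | some (m, s), k => if n < m ∧ k = m then phase 𝕜 s else 0

def frameIndex (k : ℕ) : Finset (ℕ × Option (ℕ × Fin 2)) :=
  Finset.range (k + 1) ×ˢ {none, some (k, 0), some (k, 1)}

variable {𝕜}

theorem mem_frameIndex_of_frameCoeff_ne_zero {n k : ℕ} {i : Option (ℕ × Fin 2)}
    (h : frameCoeff 𝕜 n i k ≠ 0) : (n, i) ∈ frameIndex k := by
  rcases i with _ | ⟨m, s⟩
  · obtain rfl : k = n := by by_contra hk; simp [frameCoeff, hk] at h
    simp [frameIndex]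
  · obtain ⟨hnm, rfl⟩ : n < m ∧ k = m := by by_contra hk; simp [frameCoeff, hk] at h
    fin_cases s <;> simp [frameIndex, Nat.lt_succ_of_lt hnm]

theorem norm_frameCoeff_le_one (n : ℕ) (i : Option (ℕ × Fin 2)) (k : ℕ) :
    ‖frameCoeff 𝕜 n i k‖ ≤ 1 := by
  rcases i with _ | ⟨m, s⟩ <;> simp only [frameCoeff] <;> split_ifs <;>
    simp [norm_phase_le_one]

theorem support_norm_frameCoeff_subsingleton (n : ℕ) (i : Option (ℕ × Fin 2)) :
    (support fun k => ‖frameCoeff 𝕜 n i k‖).Subsingleton := by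
  intro k hk l hl
  rcases i with _ | ⟨m, s⟩ <;> simp only [frameCoeff, mem_support] at hk hl <;>
    split_ifs at hk hl <;> simp_all

end Frame

namespace NestedBumps

variable {K : Type*} [TopologicalSpace K] (B : NestedBumps K (Option (ℕ × Fin 2)))
variable (𝕜 : Type*) [RCLike 𝕜]

def frame (k : ℕ) : C(K, 𝕜) where
  toFun x := ((B.outer k x : 𝕜) +
    ∑ p ∈ frameIndex k, frameCoeff 𝕜 p.1 p.2 k * (B.inner p.1 p.2 x : 𝕜)) / 2
  continuous_toFun := by fun_prop

variable {𝕜}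

theorem frame_apply_of_forall_ne {x : K} {n : ℕ} {i : Option (ℕ × Fin 2)}
    (hx : ∀ m j, (m, j) ≠ (n, i) → B.inner m j x = 0) (k : ℕ) :
    B.frame 𝕜 k x = ((B.outer k x : 𝕜) + frameCoeff 𝕜 n i k * (B.inner n i x : 𝕜)) / 2 := by
  simp only [frame, ContinuousMap.coe_mk]
  congr 1
  by_cases hc : frameCoeff 𝕜 n i k = 0
  · rw [hc, zero_mul, add_zero, add_eq_left]
    refine Finset.sum_eq_zero fun p _ => ?_
    by_cases hp : p = (n, i)
    · simp [hp, hc]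
    · simp [hx p.1 p.2 hp]
  · rw [Finset.sum_eq_single_of_mem (n, i) (mem_frameIndex_of_frameCoeff_ne_zero hc)
      fun p _ hp => by simp [hx p.1 p.2 hp]]

theorem sum_norm_frame_le_one (F : Finset ℕ) (x : K) : ∑ k ∈ F, ‖B.frame 𝕜 k x‖ ≤ 1 := by
  obtain ⟨n, i, hx⟩ := B.exists_forall_ne_inner_eq_zero x
  have hθ := Finset.sum_le_of_support_subsingleton
    (support_apply_subsingleton_of_pairwise_disjoint B.pairwise_disjoint_support_outer x)
    zero_le_one (fun k => (B.outer_mem_Icc k x).2) F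
  have hc := Finset.sum_le_of_support_subsingleton
    (support_norm_frameCoeff_subsingleton (𝕜 := 𝕜) n i) zero_le_one (norm_frameCoeff_le_one n i) F
  obtain ⟨hb0, hb1⟩ := B.inner_mem_Icc n i x
  calc ∑ k ∈ F, ‖B.frame 𝕜 k x‖
      ≤ ∑ k ∈ F, (B.outer k x + ‖frameCoeff 𝕜 n i k‖ * B.inner n i x) / 2 := by
        refine Finset.sum_le_sum fun k _ => ?_
        rw [B.frame_apply_of_forall_ne hx, norm_div, RCLike.norm_two]
        gcongr
        refine (norm_add_le _ _).trans_eq ?_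
        rw [norm_mul, RCLike.norm_ofReal, RCLike.norm_ofReal, abs_of_nonneg hb0,
          abs_of_nonneg (B.outer_mem_Icc k x).1]
    _ = ((∑ k ∈ F, B.outer k x) + (∑ k ∈ F, ‖frameCoeff 𝕜 n i k‖) * B.inner n i x) / 2 := by
        rw [← Finset.sum_div, Finset.sum_add_distrib, Finset.sum_mul]
    _ ≤ 1 := by nlinarith

theorem frame_center (n : ℕ) (i : Option (ℕ × Fin 2)) (k : ℕ) :
    B.frame 𝕜 k (B.center n i) = ((if k = n then 1 else 0) + frameCoeff 𝕜 n i k) / 2 := by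
  have hx : B.inner n i (B.center n i) ≠ 0 := by simp [B.inner_center]
  rw [B.frame_apply_of_forall_ne fun m j => B.inner_eq_zero_of_inner_ne_zero hx, B.inner_center]
  split_ifs with hk
  · simp [hk, B.outer_eq_one_of_inner_ne_zero n i _ hx]
  · simp [B.outer_eq_zero_of_inner_ne_zero hx hk]

theorem frame_center_none (n k : ℕ) :
    B.frame 𝕜 k (B.center n none) = if k = n then 1 else 0 := by
  rw [frame_center]
  split_ifs <;> simp_all [frameCoeff]

end NestedBumps

namespace NestedBumps

variable {K : Type*} [TopologicalSpace K] [CompactSpace K] (B : NestedBumps K (Option (ℕ × Fin 2)))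
variable (𝕜 : Type*) [RCLike 𝕜]

def c0Embedding : C₀(ℕ, 𝕜) →ₗᵢ[𝕜] C(K, 𝕜) :=
  c0SeriesIsometry B.sum_norm_frame_le_one (fun n => B.center n none) B.frame_center_none

theorem c0Embedding_apply_center_none (a : C₀(ℕ, 𝕜)) (n : ℕ) :
    B.c0Embedding 𝕜 a (B.center n none) = a n :=
  c0SeriesMap_apply_eq_of_forall_eq_ite B.sum_norm_frame_le_one (B.frame_center_none n) a

theorem c0Embedding_apply_center_some (a : C₀(ℕ, 𝕜)) {n m : ℕ} (hnm : n < m) (s : Fin 2) :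
    B.c0Embedding 𝕜 a (B.center n (some (m, s))) = (a n + phase 𝕜 s * a m) / 2 := by
  have hS (k) (hk : k ∉ ({n, m} : Finset ℕ)) : B.frame 𝕜 k (B.center n (some (m, s))) = 0 := by
    simp only [Finset.mem_insert, Finset.mem_singleton, not_or] at hk
    simp [frame_center, frameCoeff, hk.1, hk.2]
  change c0SeriesMap B.sum_norm_frame_le_one a _ = _
  rw [c0SeriesMap_apply_eq_sum _ hS, Finset.sum_pair hnm.ne, frame_center, frame_center]
  simp only [frameCoeff, hnm, hnm.ne, hnm.ne', ↓reduceIte, and_self, and_false, add_zero,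
    zero_add]
  ring

end NestedBumps

/-- If `K` is a compact Hausdorff space whose derived set (the set of
non-isolated points) is infinite, with scalars `𝕜 ∈ {ℝ, ℂ}`, then there is a linear isometric
embedding of `c₀` into `C(K)` whose range does SPR. -/
theorem c0_SPR_embedding_of_infinite_derived_set {𝕜 : Type*} [RCLike 𝕜]
    {K : Type*} [TopologicalSpace K] [CompactSpace K] [T2Space K]
    (hinf : (derivedSet (Set.univ : Set K)).Infinite) :
    ∃ J : C₀(ℕ, 𝕜) →ₗᵢ[𝕜] C(K, 𝕜), DoesSPR (LinearMap.range J.toLinearMap) := by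
  obtain ⟨B⟩ := exists_nestedBumps hinf (Option (ℕ × Fin 2))
  exact ⟨B.c0Embedding 𝕜, doesSPR_range_of_apply _ _ _ (B.c0Embedding_apply_center_none 𝕜)
    fun a _ _ hnm s => B.c0Embedding_apply_center_some 𝕜 a hnm s⟩

end
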